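/- No prime palstar is a proper prefix of another prime palstar. -/

import Mathlib

open scoped Computability

/-- `PAL` is the set of nonempty even-length palindromes `x ++ xᴿ`. -/
def PAL (α : Type) : Language α := {w | ∃ x : List α, x ≠ [] ∧ w = x ++ x.reverse}

/-- `PALSTAR` is the Kleene star of `PAL`. -/
def PALSTAR (α : Type) : Language α := (PAL α)∗

/-- A prime palstar: a nonempty palstar that is not a product of two nonempty palstars. -/
def IsPrimePalstar {α : Type} (w : List α) : Prop :=
  w ∈ PALSTAR α ∧ w ≠ [] ∧
    ¬ ∃ u v : List α, u ∈ PALSTAR α ∧ v ∈ PALSTAR α ∧ u ≠ [] ∧ v ≠ [] ∧ w = u ++ v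

namespace PalstarAux

variable {α : Type}

lemma pal_ne_nil {w : List α} (h : w ∈ PAL α) : w ≠ [] := by
  obtain ⟨x, hx, rfl⟩ := h
  simp [hx]

lemma pal_reverse {w : List α} (h : w ∈ PAL α) : w.reverse = w := by
  obtain ⟨x, hx, rfl⟩ := h
  simp

lemma pal_even {w : List α} (h : w ∈ PAL α) : Even w.length := by
  obtain ⟨x, hx, rfl⟩ := h
  exact ⟨x.length, by simp⟩

lemma mem_pal_of {w : List α} (hne : w ≠ []) (hev : Even w.length) (hp : w.reverse = w) :
    w ∈ PAL α := by
  obtain ⟨k, hk⟩ := hev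
  refine ⟨w.take k, ?_, ?_⟩
  · intro h
    have h0 : min k w.length = 0 := by simpa using congrArg List.length h
    exact hne (List.eq_nil_of_length_eq_zero (by omega))
  · have hdrop : (w.take k).reverse = w.drop k := by
      rw [List.reverse_take, hp]
      congr 1
      omega
    conv_lhs => rw [← List.take_append_drop k w]
    rw [hdrop]

lemma pal_mem_palstar {w : List α} (h : w ∈ PAL α) : w ∈ PALSTAR α := by
  rw [PALSTAR, Language.mem_kstar]
  exact ⟨[w], by simp, by simpa using h⟩

lemma nil_mem_palstar : ([] : List α) ∈ PALSTAR α := Language.nil_mem_kstar _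

lemma append_mem_palstar {u v : List α} (hu : u ∈ PALSTAR α) (hv : v ∈ PALSTAR α) :
    u ++ v ∈ PALSTAR α := by
  rw [PALSTAR, Language.mem_kstar] at hu hv ⊢
  obtain ⟨L, rfl, hL⟩ := hu
  obtain ⟨M, rfl, hM⟩ := hv
  refine ⟨L ++ M, by simp, ?_⟩
  intro y hy
  rcases List.mem_append.mp hy with h | h
  · exact hL y h
  · exact hM y h

lemma prime_mem_pal {w : List α} (h : IsPrimePalstar w) : w ∈ PAL α := by
  obtain ⟨hw, hne, hnd⟩ := h
  rw [PALSTAR, Language.mem_kstar] at hw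
  obtain ⟨L, rfl, hL⟩ := hw
  match L, hL, hne, hnd with
  | [], _, hne, _ => simp at hne
  | [a], hL, _, _ => simpa using hL a (by simp)
  | a :: b :: rest, hL, hne, hnd =>
    exfalso
    apply hnd
    have ha : a ∈ PAL α := hL a (by simp)
    have hb : b ∈ PAL α := hL b (by simp)
    refine ⟨a, (b :: rest).flatten, pal_mem_palstar ha, ?_, pal_ne_nil ha, ?_, by simp⟩
    · rw [PALSTAR, Language.mem_kstar]
      exact ⟨b :: rest, rfl, fun y hy => hL y (List.mem_cons_of_mem a hy)⟩
    · have : (b :: rest).flatten = b ++ rest.flatten := by simp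
      rw [this]
      intro hcontra
      exact pal_ne_nil hb (List.append_eq_nil_iff.mp hcontra).1

lemma exists_prime_prefix_aux : ∀ n : ℕ, ∀ w : List α, w.length ≤ n →
    w ∈ PALSTAR α → w ≠ [] →
    ∃ a b : List α, IsPrimePalstar a ∧ b ∈ PALSTAR α ∧ w = a ++ b := by
  intro n
  induction n with
  | zero =>
    intro w hl _ hne
    exact absurd (List.eq_nil_of_length_eq_zero (Nat.le_zero.mp hl)) hne
  | succ n ih =>
    intro w hl hw hne
    by_cases hp : IsPrimePalstar w
    · exact ⟨w, [], hp, nil_mem_palstar, by simp⟩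
    · have : ∃ p q : List α, p ∈ PALSTAR α ∧ q ∈ PALSTAR α ∧ p ≠ [] ∧ q ≠ [] ∧ w = p ++ q := by
        by_contra hc
        exact hp ⟨hw, hne, hc⟩
      obtain ⟨p, q, hpp, hqq, hpne, hqne, rfl⟩ := this
      have hplen : p.length ≤ n := by
        have h1 : (p ++ q).length ≤ n + 1 := hl
        have h2 : 1 ≤ q.length := List.length_pos_iff.mpr hqne
        simp [List.length_append] at h1
        omega
      obtain ⟨a, b, ha, hb, rfl⟩ := ih p hplen hpp hpne
      exact ⟨a, b ++ q, ha, append_mem_palstar hb hqq, by simp [List.append_assoc]⟩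

lemma main_aux : ∀ n : ℕ, ∀ u v : List α, v.length ≤ n →
    IsPrimePalstar u → IsPrimePalstar v →
    ¬ ∃ z : List α, z ≠ [] ∧ v = u ++ z := by
  intro n
  induction n with
  | zero =>
    rintro u v hl hu hv ⟨z, hz, rfl⟩
    have := hu.2.1
    have : u = [] := by
      have h0 : (u ++ z).length = 0 := Nat.le_zero.mp hl
      simp at h0
      exact h0.1
    exact hu.2.1 this
  | succ n ih =>
    rintro u v hl hu hv ⟨z, hz, rfl⟩
    have hupal := prime_mem_pal hu
    have hvpal := prime_mem_pal hv
    have hur := pal_reverse hupal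
    have hvr := pal_reverse hvpal
    have hueven := pal_even hupal
    have hveven := pal_even hvpal
    have hzeven : Even z.length := by
      rw [Nat.even_iff] at *
      have : (u ++ z).length = u.length + z.length := List.length_append
      have h1 := hueven
      have h2 : (u.length + z.length) % 2 = 0 := by rw [← this]; exact hveven
      omega
    have key : u ++ z = z.reverse ++ u := by
      have h1 : (u ++ z).reverse = u ++ z := hvr
      rw [List.reverse_append, hur] at h1
      exact h1.symm
    rcases List.append_eq_append_iff.mp key with ⟨s, hs1, hs2⟩ | ⟨m, hm1, hm2⟩
    · -- Case 1: z.reverse = u ++ s, z = s ++ u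
      have hsrev : s.reverse = s := by
        have h1 : z = s.reverse ++ u := by
          rw [← List.reverse_reverse z, hs1, List.reverse_append, hur]
        have h2 : s ++ u = s.reverse ++ u := by rw [← hs2, h1]
        exact (List.append_cancel_right h2).symm
      have hsstar : s ++ u ∈ PALSTAR α := by
        by_cases hsnil : s = []
        · subst hsnil
          simpa using pal_mem_palstar hupal
        · have hseven : Even s.length := by
            rw [Nat.even_iff] at *
            have : z.length = s.length + u.length := by rw [hs2]; exact List.length_append
            omega
          exact append_mem_palstar (pal_mem_palstar (mem_pal_of hsnil hseven hsrev))
            (pal_mem_palstar hupal)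
      apply hv.2.2
      refine ⟨u, s ++ u, pal_mem_palstar hupal, hsstar, hu.2.1, ?_, by rw [hs2]⟩
      intro hcontra
      exact hu.2.1 (List.append_eq_nil_iff.mp hcontra).2
    · -- Case 2: u = z.reverse ++ m, u = m ++ z
      by_cases hmnil : m = []
      · subst hmnil
        simp at hm2
        apply hv.2.2
        exact ⟨u, u, pal_mem_palstar hupal, pal_mem_palstar hupal, hu.2.1, hu.2.1,
          by rw [← hm2]⟩
      · have hmrev : m.reverse = m := by
          have h1 : u.reverse = z.reverse ++ m.reverse := by rw [hm2, List.reverse_append]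
          rw [hur] at h1
          rw [hm1] at h1
          exact (List.append_cancel_left h1).symm
        have hmeven : Even m.length := by
          rw [Nat.even_iff] at *
          have : u.length = m.length + z.length := by rw [hm2]; exact List.length_append
          omega
        have hmpal : m ∈ PAL α := mem_pal_of hmnil hmeven hmrev
        obtain ⟨a, b, ha, hb, hab⟩ := exists_prime_prefix_aux m.length m le_rfl
          (pal_mem_palstar hmpal) hmnil
        have hulen : u.length ≤ n := by
          have h1 : (u ++ z).length ≤ n + 1 := hl
          have h2 : 1 ≤ z.length := List.length_pos_iff.mpr hz
          simp [List.length_append] at h1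
          omega
        apply ih a u hulen ha hu
        refine ⟨b ++ z, ?_, ?_⟩
        · intro hcontra
          exact hz (List.append_eq_nil_iff.mp hcontra).2
        · rw [hm2, hab, List.append_assoc]

end PalstarAux

/-- No prime palstar is a proper prefix of another prime palstar. -/
theorem primePalstar_not_proper_prefix {α : Type} (u v : List α)
    (hu : IsPrimePalstar u) (hv : IsPrimePalstar v) :
    ¬ ∃ z : List α, z ≠ [] ∧ v = u ++ z := by
  exact PalstarAux.main_aux v.length u v le_rfl hu hv
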